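/- Trace inequality for doubled Choi operators (Lemma 5 of the paper): Let H_{A'} be a copy of H_A, let ω be a Hermitian matrix on H_A⊗H_B, and let ρ be a Hermitian matrix on H_A⊗H_{A'}. On H_A⊗H_{A'}⊗H_B, let ω_{AB} denote ω acting on the factors A and B (tensored with I_{A'}), let ω_{A'B} denote the same matrix ω acting on the factors A' and B (tensored with I_A), and let ρ_{AA'} denote ρ acting on the factors A and A' (tensored with I_B). Then |Tr[ ω_{AB} · ω_{A'B} · ρ_{AA'} ]| ≤ Tr(ω²) · √(Tr(ρ²)). -/

import Mathlib

open scoped Kronecker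
open MeasureTheory Matrix
open scoped ComplexOrder

noncomputable section

namespace Decoupling

/-- We equip the unitary group with its Borel σ-algebra. -/
instance (n : Type*) [Fintype n] [DecidableEq n] :
    MeasurableSpace (Matrix.unitaryGroup n ℂ) := borel _

instance (n : Type*) [Fintype n] [DecidableEq n] :
    BorelSpace (Matrix.unitaryGroup n ℂ) := ⟨rfl⟩

/-- The trace norm (Schatten 1-norm) `‖X‖₁ = Tr √(XᴴX)` of a complex matrix. -/
def trNorm {n : Type*} [Fintype n] [DecidableEq n] (X : Matrix n n ℂ) : ℝ :=
  (((Matrix.isHermitian_conjTranspose_mul_self X).eigenvectorUnitary : Matrix n n ℂ) *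
    Matrix.diagonal (((↑) : ℝ → ℂ) ∘ Real.sqrt ∘ (Matrix.isHermitian_conjTranspose_mul_self X).eigenvalues) *
    (star (Matrix.isHermitian_conjTranspose_mul_self X).eigenvectorUnitary : Matrix n n ℂ)).trace.re

/-- The Hilbert–Schmidt norm (Schatten 2-norm) `‖X‖₂ = √(Tr (XᴴX))`. -/
def hsNorm {n : Type*} [Fintype n] (X : Matrix n n ℂ) : ℝ :=
  Real.sqrt ((Xᴴ * X).trace.re)

/-- Partial trace over the first tensor factor. -/
def ptrFst {a r : Type*} [Fintype a] (ρ : Matrix (a × r) (a × r) ℂ) : Matrix r r ℂ :=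
  Matrix.of fun i j => ∑ k, ρ (k, i) (k, j)

/-- Partial trace over the second tensor factor. -/
def ptrSnd {a r : Type*} [Fintype r] (ρ : Matrix (a × r) (a × r) ℂ) : Matrix a a ℂ :=
  Matrix.of fun i j => ∑ k, ρ (i, k) (j, k)

/-- The maximally entangled state `Φ_{AA'}` on `H_A ⊗ H_{A'}`. -/
def maxEnt (a : Type*) [Fintype a] [DecidableEq a] : Matrix (a × a) (a × a) ℂ :=
  Matrix.of fun p q => if p.1 = p.2 ∧ q.1 = q.2 then (Fintype.card a : ℂ)⁻¹ else 0

/-- The tensor product `T ⊗ E` of two superoperators (given on basis matrices, which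
for linear `T`, `E` agrees with the usual tensor product of linear maps). -/
def tensorHom {a a' b r : Type*} [Fintype a] [Fintype a'] [DecidableEq a] [DecidableEq a']
    (T : Matrix a a ℂ → Matrix b b ℂ) (E : Matrix a' a' ℂ → Matrix r r ℂ)
    (M : Matrix (a × a') (a × a') ℂ) : Matrix (b × r) (b × r) ℂ :=
  Matrix.of fun p q => ∑ i, ∑ j, ∑ k, ∑ l,
    M (i, k) (j, l) * T (Matrix.single i j 1) p.1 q.1
      * E (Matrix.single k l 1) p.2 q.2

/-- The Choi–Jamiołkowski representation `ω = (T ⊗ id)(Φ_{AA'})`, with the output (`B`)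
factor first and the copy `A'` second. -/
def choi {a b : Type*} [Fintype a] [DecidableEq a]
    (T : Matrix a a ℂ → Matrix b b ℂ) : Matrix (b × a) (b × a) ℂ :=
  tensorHom T id (maxEnt a)

/-- Reindexing that exchanges the two tensor factors. -/
def swapIdx {a b : Type*} (M : Matrix (a × b) (a × b) ℂ) : Matrix (b × a) (b × a) ℂ :=
  M.submatrix Prod.swap Prod.swap

/-- The conditional min-entropy `Hmin(A|B)_ρ` of a bipartite operator (conditioning on the
second tensor factor). -/
def Hmin {a b : Type*} [Fintype a] [DecidableEq a] [Fintype b]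
    (ρ : Matrix (a × b) (a × b) ℂ) : ℝ :=
  sSup {x : ℝ | ∃ σ : Matrix b b ℂ, σ.PosSemidef ∧ σ.trace = 1 ∧
    ((2 : ℝ) ^ (-x) • ((1 : Matrix a a ℂ) ⊗ₖ σ) - ρ).PosSemidef}

/-- A subnormalized density operator. -/
def IsSubDensity {n : Type*} [Fintype n] (ρ : Matrix n n ℂ) : Prop :=
  ρ.PosSemidef ∧ ρ.trace.re ≤ 1

/-- Conjugation `(U ⊗ 1_R) ρ (U ⊗ 1_R)ᴴ` on the first factor. -/
def conjA {a r : Type*} [Fintype a] [Fintype r] [DecidableEq r]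
    (U : Matrix a a ℂ) (ρ : Matrix (a × r) (a × r) ℂ) : Matrix (a × r) (a × r) ℂ :=
  (U ⊗ₖ (1 : Matrix r r ℂ)) * ρ * (U ⊗ₖ (1 : Matrix r r ℂ))ᴴ

/-- Two-fold conjugation `U^{⊗2} M (U^{⊗2})ᴴ`. -/
def conj2 {a : Type*} [Fintype a] (U : Matrix a a ℂ) (M : Matrix (a × a) (a × a) ℂ) :
    Matrix (a × a) (a × a) ℂ :=
  (U ⊗ₖ U) * M * (U ⊗ₖ U)ᴴ

/-- The Haar two-fold twirl `G_H(M) = ∫ U^{⊗2} M (U†)^{⊗2} dU` (entrywise integral). -/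
def twirlHaar {a : Type*} [Fintype a] [DecidableEq a]
    (μ : Measure (Matrix.unitaryGroup a ℂ)) (M : Matrix (a × a) (a × a) ℂ) :
    Matrix (a × a) (a × a) ℂ :=
  Matrix.of fun p q => ∫ U : Matrix.unitaryGroup a ℂ, conj2 (U : Matrix a a ℂ) M p q ∂μ

/-- The two-fold twirl `G_W(M) = ∑ i, p i • U_i^{⊗2} M (U_i†)^{⊗2}` of a finite family. -/
def twirlMix {ι a : Type*} [Fintype ι] [Fintype a] [DecidableEq a]
    (p : ι → ℝ) (V : ι → Matrix.unitaryGroup a ℂ) (M : Matrix (a × a) (a × a) ℂ) :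
    Matrix (a × a) (a × a) ℂ :=
  ∑ i, p i • conj2 (V i : Matrix a a ℂ) M

/-- `‖S‖⋄ ≤ δ`: the trace norm of `(S ⊗ id_R)(X)` is at most `δ ‖X‖₁` for every ancilla `R`
and every `X`. -/
def DiamondLE {c : Type*} [Fintype c] [DecidableEq c]
    (S : Matrix c c ℂ → Matrix c c ℂ) (δ : ℝ) : Prop :=
  ∀ (m : ℕ) (X : Matrix (c × Fin m) (c × Fin m) ℂ),
    trNorm (tensorHom S id X) ≤ δ * trNorm X

/-- `{(p i, V i)}` is a `δ`-approximate unitary two-design (w.r.t. the Haar probability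
measure `μ`). -/
def IsApproxTwoDesign {ι a : Type*} [Fintype ι] [Fintype a] [DecidableEq a]
    (μ : Measure (Matrix.unitaryGroup a ℂ))
    (p : ι → ℝ) (V : ι → Matrix.unitaryGroup a ℂ) (δ : ℝ) : Prop :=
  (∀ i, 0 ≤ p i) ∧ (∑ i, p i = 1) ∧
    DiamondLE (fun M => twirlMix p V M - twirlHaar μ M) δ

end Decoupling

namespace Decoupling

/-- Embed an operator on `H_A ⊗ H_B` into `H_A ⊗ H_{A'} ⊗ H_B` (identity on `A'`). -/
def embAB {a b : Type*} [DecidableEq a] (ω : Matrix (a × b) (a × b) ℂ) :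
    Matrix (a × a × b) (a × a × b) ℂ :=
  Matrix.of fun p q => (if p.2.1 = q.2.1 then 1 else 0) * ω (p.1, p.2.2) (q.1, q.2.2)

/-- Embed an operator on `H_{A'} ⊗ H_B` into `H_A ⊗ H_{A'} ⊗ H_B` (identity on `A`). -/
def embA'B {a b : Type*} [DecidableEq a] (ω : Matrix (a × b) (a × b) ℂ) :
    Matrix (a × a × b) (a × a × b) ℂ :=
  Matrix.of fun p q => (if p.1 = q.1 then 1 else 0) * ω (p.2.1, p.2.2) (q.2.1, q.2.2)

/-- Embed an operator on `H_A ⊗ H_{A'}` into `H_A ⊗ H_{A'} ⊗ H_B` (identity on `B`). -/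
def embAA' {a b : Type*} [DecidableEq b] (ρ : Matrix (a × a) (a × a) ℂ) :
    Matrix (a × a × b) (a × a × b) ℂ :=
  Matrix.of fun p q => (if p.2.2 = q.2.2 then 1 else 0) * ρ (p.1, p.2.1) (q.1, q.2.1)

end Decoupling

/-!
With `K = Tr_B[ω_{AB} ω_{A'B}]` the trace is `Tr[K ρ]`, which Cauchy–Schwarz bounds by
`‖K‖₂ ‖ρ‖₂` (Hilbert–Schmidt norms). The realignment `(x₁x₂, y₁y₂) ↦ (x₁y₁, x₂y₂)` only permutes
entries, and it turns `K` into a product of two matrices that are themselves entry permutations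
of `ω`; hence `‖K‖₂ ≤ ‖ω‖₂²`. For Hermitian `ω`, `ρ` one has `Tr(ω²) = ‖ω‖₂²`, `Tr(ρ²) = ‖ρ‖₂²`.
-/

namespace Matrix

section Frobenius

attribute [local instance] Matrix.frobeniusSeminormedAddCommGroup

variable {m n m' n' : Type*} [Fintype m] [Fintype n] [Fintype m'] [Fintype n']

theorem frobenius_norm_eq_sqrt {α : Type*} [SeminormedAddCommGroup α] (A : Matrix m n α) :
    ‖A‖ = √(∑ i, ∑ j, ‖A i j‖ ^ 2) := by
  simp [frobenius_norm_def, Real.sqrt_eq_rpow]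

theorem frobenius_norm_submatrix_equiv {α : Type*} [SeminormedAddCommGroup α] (A : Matrix m n α)
    (e : m' ≃ m) (f : n' ≃ n) : ‖A.submatrix e f‖ = ‖A‖ := by
  simp only [frobenius_norm_eq_sqrt, submatrix_apply]
  rw [Equiv.sum_comp e (fun i => ∑ j, ‖A i (f j)‖ ^ 2)]
  congr 1
  exact Finset.sum_congr rfl fun i _ => Equiv.sum_comp f (fun j => ‖A i j‖ ^ 2)

def realign {α p q : Type*} (M : Matrix (m × n) (p × q) α) : Matrix (m × p) (n × q) α :=
  of fun x y => M (x.1, y.1) (x.2, y.2)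

theorem frobenius_norm_realign {α p q : Type*} [Fintype p] [Fintype q] [SeminormedAddCommGroup α]
    (M : Matrix (m × n) (p × q) α) : ‖realign M‖ = ‖M‖ := by
  simp only [frobenius_norm_eq_sqrt, realign, of_apply, Fintype.sum_prod_type]
  congr 1
  refine Finset.sum_congr rfl fun i _ => ?_
  rw [Finset.sum_comm]

theorem norm_trace_mul_le_frobenius {α : Type*} [RCLike α] (A : Matrix m n α) (B : Matrix n m α) :
    ‖(A * B).trace‖ ≤ ‖A‖ * ‖B‖ := by
  calc ‖(A * B).trace‖ ≤ ∑ i, ∑ j, ‖A i j‖ * ‖Bᵀ i j‖ := by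
        simp only [trace, diag_apply, mul_apply, transpose_apply]
        refine (norm_sum_le _ _).trans (Finset.sum_le_sum fun i _ => ?_)
        exact (norm_sum_le _ _).trans_eq (by simp only [norm_mul])
    _ = ∑ x : m × n, ‖A x.1 x.2‖ * ‖Bᵀ x.1 x.2‖ :=
        (Fintype.sum_prod_type (fun x : m × n => ‖A x.1 x.2‖ * ‖Bᵀ x.1 x.2‖)).symm
    _ ≤ √(∑ x : m × n, ‖A x.1 x.2‖ ^ 2) * √(∑ x : m × n, ‖Bᵀ x.1 x.2‖ ^ 2) :=
        Real.sum_mul_le_sqrt_mul_sqrt _ _ _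
    _ = ‖A‖ * ‖B‖ := by
        rw [← frobenius_norm_transpose B, frobenius_norm_eq_sqrt, frobenius_norm_eq_sqrt,
          Fintype.sum_prod_type, Fintype.sum_prod_type]

theorem IsHermitian.re_trace_mul_self {M : Matrix n n ℂ} (hM : M.IsHermitian) :
    (M * M).trace.re = ‖M‖ ^ 2 := by
  rw [frobenius_norm_eq_sqrt, Real.sq_sqrt (by positivity)]
  simp only [trace, diag_apply, mul_apply, Complex.re_sum]
  refine Finset.sum_congr rfl fun i _ => Finset.sum_congr rfl fun j _ => ?_
  rw [← hM.apply j i, RCLike.star_def, Complex.mul_conj, Complex.ofReal_re, Complex.normSq_eq_norm_sq]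

end Frobenius

end Matrix

namespace Decoupling

section PartialTrace

attribute [local instance] Matrix.frobeniusSeminormedAddCommGroup

variable {a a' b : Type*} [Fintype a] [Fintype a'] [Fintype b]

def partialTraceB (X : Matrix (a × a' × b) (a × a' × b) ℂ) : Matrix (a × a') (a × a') ℂ :=
  of fun u v => ∑ k, X (u.1, u.2, k) (v.1, v.2, k)

theorem trace_mul_embAA' [DecidableEq b] (X : Matrix (a × a × b) (a × a × b) ℂ)
    (ρ : Matrix (a × a) (a × a) ℂ) :
    (X * embAA' (b := b) ρ).trace = (partialTraceB X * ρ).trace := by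
  simp only [trace, diag_apply, mul_apply, partialTraceB, embAA', of_apply, Fintype.sum_prod_type,
    ite_mul, one_mul, zero_mul, mul_ite, mul_zero, Finset.sum_ite_eq', Finset.mem_univ, if_true,
    Finset.sum_mul]
  refine Finset.sum_congr rfl fun i _ => Finset.sum_congr rfl fun i' _ => ?_
  rw [Finset.sum_comm]
  exact Finset.sum_congr rfl fun j _ => Finset.sum_comm

theorem partialTraceB_embAB_mul_embA'B [DecidableEq a] (ω : Matrix (a × b) (a × b) ℂ) :
    partialTraceB (embAB ω * embA'B ω) =
      realign (realign ω * ((realign ω).submatrix id Prod.swap)ᵀ) := by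
  ext ⟨x₁, x₂⟩ ⟨y₁, y₂⟩
  simp only [partialTraceB, realign, embAB, embA'B, of_apply, mul_apply, Fintype.sum_prod_type,
    submatrix_apply, transpose_apply, id, Prod.swap, ite_mul, one_mul, zero_mul, mul_ite, mul_zero,
    Finset.sum_ite_irrel, Finset.sum_const_zero, Finset.sum_ite_eq, Finset.sum_ite_eq',
    Finset.mem_univ, if_true]

theorem frobenius_norm_partialTraceB_embAB_mul_embA'B_le [DecidableEq a]
    (ω : Matrix (a × b) (a × b) ℂ) : ‖partialTraceB (embAB ω * embA'B ω)‖ ≤ ‖ω‖ ^ 2 := by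
  rw [partialTraceB_embAB_mul_embA'B, frobenius_norm_realign, sq]
  calc _ ≤ ‖realign ω‖ * ‖((realign ω).submatrix id Prod.swap)ᵀ‖ := frobenius_norm_mul _ _
    _ = ‖ω‖ * ‖ω‖ := by
        rw [frobenius_norm_transpose, frobenius_norm_realign]
        congr 1
        exact (frobenius_norm_submatrix_equiv _ (Equiv.refl _) (Equiv.prodComm b b)).trans
          (frobenius_norm_realign ω)

end PartialTrace

attribute [local instance] Matrix.frobeniusSeminormedAddCommGroup in
/-- **Trace inequality for doubled Choi operators** (Lemma 5 of the paper):
`|Tr[ω_{AB} ω_{A'B} ρ_{AA'}]| ≤ Tr(ω²) √(Tr(ρ²))` for Hermitian `ω`, `ρ`. -/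
theorem doubled_choi_trace_bound {a b : Type*} [Fintype a] [DecidableEq a]
    [Fintype b] [DecidableEq b]
    (ω : Matrix (a × b) (a × b) ℂ) (hω : ω.IsHermitian)
    (ρ : Matrix (a × a) (a × a) ℂ) (hρ : ρ.IsHermitian) :
    ‖(embAB ω * embA'B ω * embAA' (b := b) ρ).trace‖ ≤
      ((ω * ω).trace).re * Real.sqrt (((ρ * ρ).trace).re) := by
  rw [hω.re_trace_mul_self, hρ.re_trace_mul_self, Real.sqrt_sq (norm_nonneg ρ),
    trace_mul_embAA']
  calc _ ≤ ‖partialTraceB (embAB ω * embA'B ω)‖ * ‖ρ‖ := norm_trace_mul_le_frobenius _ _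
    _ ≤ ‖ω‖ ^ 2 * ‖ρ‖ := by
        gcongr
        exact frobenius_norm_partialTraceB_embAB_mul_embA'B_le ω

end Decoupling
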